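/- arXiv:2501.07928 — 4 statements merged into one kernel-verified Lean document; each statement's English description precedes it below -/
import Mathlib

section
/- Let G be a finite abelian group of order 2^{m+ℓ}·d with d odd, having exactly f = 2^m - 1 involutions (m ≥ 1, ℓ ≥ 0). If there exists a family F of 3-element subsets of G whose multiset of differences covers each element of G outside the union of a partial spread Σ of type {2^f, 3^e} exactly once, then 2^{m-1}(2^ℓ d - 1) ≡ e (mod 3). -/
open scoped Classical

/-- The multiset of differences of a triple (finite subset) of an abelian group:
all differences `x - y` with `x ≠ y` in `T`. -/
noncomputable def tripleDiffs {G : Type*} [AddCommGroup G] (T : Finset G) : Multiset G :=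
  ((T ×ˢ T).filter (fun p => p.1 ≠ p.2)).val.map (fun p => p.1 - p.2)

/-- The multiset of differences of a family of triples. -/
noncomputable def famDiffs {G : Type*} [AddCommGroup G] (F : Finset (Finset G)) : Multiset G :=
  F.val.bind tripleDiffs

/-!
Count `G` in two ways. The difference multiset of a family `F` of triples has `6 |F|` elements,
and the nonzero elements of the spread members are pairwise distinct, so the union of the spread
has `1 + (2^m - 1) + 2e` elements. Hence `2^(m+ℓ) d = 6 |F| + 2^m + 2e`; dividing by `2` and
reducing modulo `3` gives the congruence.
-/

section Differences

variable {G : Type*} [AddCommGroup G]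

theorem card_tripleDiffs (T : Finset G) :
    Multiset.card (tripleDiffs T) = T.card * T.card - T.card := by
  have hoff : (T ×ˢ T).filter (fun p => p.1 ≠ p.2) = T.offDiag := by
    ext p
    simp only [Finset.mem_offDiag, Finset.mem_filter, Finset.mem_product, and_assoc]
  rw [tripleDiffs, Multiset.card_map, hoff, Finset.card_val, Finset.offDiag_card]

theorem card_famDiffs_of_card_eq_three {F : Finset (Finset G)} (hF : ∀ T ∈ F, T.card = 3) :
    Multiset.card (famDiffs F) = 6 * F.card := by
  rw [famDiffs, Multiset.card_bind, mul_comm, ← smul_eq_mul, ← Finset.sum_const]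
  exact Finset.sum_congr rfl fun T hT => by rw [Function.comp_apply, card_tripleDiffs, hF T hT]

end Differences

section Spread

variable {G : Type*} [AddGroup G]

theorem sum_card_sub_one_of_card_eq_two_or_three {Sp : Finset (AddSubgroup G)}
    (horders : ∀ S ∈ Sp, Nat.card S = 2 ∨ Nat.card S = 3) :
    ∑ S ∈ Sp, (Nat.card S - 1) =
      (Sp.filter fun S : AddSubgroup G => Nat.card S = 2).card +
        2 * (Sp.filter fun S : AddSubgroup G => Nat.card S = 3).card := by
  simp only [Finset.card_filter, Finset.mul_sum, ← Finset.sum_add_distrib]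
  refine Finset.sum_congr rfl fun S hS => ?_
  rcases horders S hS with h | h <;> rw [h] <;> rfl

variable [Fintype G]

noncomputable def spreadUnion (Sp : Finset (AddSubgroup G)) : Finset G :=
  Finset.univ.filter fun g => ∃ S ∈ Sp, g ∈ S

theorem card_spreadUnion {Sp : Finset (AddSubgroup G)} (hne : Sp.Nonempty)
    (htriv : ∀ S ∈ Sp, ∀ S' ∈ Sp, S ≠ S' → S ⊓ S' = ⊥) :
    (spreadUnion Sp).card = 1 + ∑ S ∈ Sp, (Nat.card S - 1) := by
  set nonzero : AddSubgroup G → Finset G := fun S => (S : Set G).toFinset.erase 0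
  have hdisj : (Sp : Set (AddSubgroup G)).PairwiseDisjoint nonzero := by
    intro S hS S' hS' hne
    refine Finset.disjoint_left.mpr fun g hg hg' => ?_
    simp only [nonzero, Finset.mem_erase, Set.mem_toFinset, SetLike.mem_coe] at hg hg'
    have hmem : g ∈ S ⊓ S' := ⟨hg.2, hg'.2⟩
    rw [htriv S hS S' hS' hne, AddSubgroup.mem_bot] at hmem
    exact hg.1 hmem
  have hunion : spreadUnion Sp = insert 0 (Sp.biUnion nonzero) := by
    obtain ⟨S₀, hS₀⟩ := hne
    ext g
    by_cases hg : g = 0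
    · simp only [spreadUnion, hg, Finset.mem_filter, Finset.mem_univ, true_and,
        Finset.mem_insert, true_or, iff_true]
      exact ⟨S₀, hS₀, S₀.zero_mem⟩
    · simp [spreadUnion, nonzero, hg]
  have h0 : (0 : G) ∉ Sp.biUnion nonzero := by simp [nonzero]
  have hcard : ∀ S ∈ Sp, (nonzero S).card = Nat.card S - 1 := fun S _ => by
    rw [Finset.card_erase_of_mem (by simp), ← Nat.card_eq_card_toFinset, SetLike.coe_sort_coe]
  rw [hunion, Finset.card_insert_of_notMem h0, Finset.card_biUnion hdisj,
    Finset.sum_congr rfl hcard, add_comm]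

theorem card_compl_spreadUnion (Sp : Finset (AddSubgroup G)) :
    (Finset.univ.filter fun g : G => ∀ S ∈ Sp, g ∉ S).card + (spreadUnion Sp).card =
      Fintype.card G := by
  rw [add_comm, spreadUnion, ← Finset.card_univ,
    ← Finset.card_filter_add_card_filter_not (s := Finset.univ) (fun g : G => ∃ S ∈ Sp, g ∈ S)]
  simp only [not_exists, not_and]

end Spread

theorem two_pow_pred_mul_sub_one_modEq {m ℓ d n e : ℕ} (hm : 1 ≤ m)
    (h : 2 ^ (m + ℓ) * d = 6 * n + 2 ^ m + 2 * e) :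
    2 ^ (m - 1) * (2 ^ ℓ * d - 1) ≡ e [MOD 3] := by
  obtain ⟨k, rfl⟩ : ∃ k, m = k + 1 := ⟨m - 1, by omega⟩
  have hhalf : 2 ^ k * (2 ^ ℓ * d) = 3 * n + 2 ^ k + e := by
    rw [pow_add, pow_succ] at h
    linarith
  have hsub : 2 ^ k * (2 ^ ℓ * d - 1) = 3 * n + e := by
    rw [Nat.mul_sub_one]
    omega
  rw [Nat.add_sub_cancel, hsub, Nat.ModEq, Nat.mul_add_mod_self_left]

theorem stmt_5_general {G : Type*} [AddCommGroup G] [Fintype G]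
    (m ℓ d e : ℕ) (hm : 1 ≤ m)
    (hcard : Fintype.card G = 2 ^ (m + ℓ) * d)
    (Sp : Finset (AddSubgroup G))
    (htriv : ∀ S ∈ Sp, ∀ S' ∈ Sp, S ≠ S' → S ⊓ S' = ⊥)
    (horders : ∀ S ∈ Sp, Nat.card ↥S = 2 ∨ Nat.card ↥S = 3)
    (h2 : (Sp.filter (fun (S : AddSubgroup G) => Nat.card ↥S = 2)).card = 2 ^ m - 1)
    (h3 : (Sp.filter (fun (S : AddSubgroup G) => Nat.card ↥S = 3)).card = e)
    (F : Finset (Finset G)) (hF3 : ∀ T ∈ F, T.card = 3)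
    (hDF : famDiffs F = (Finset.univ.filter (fun g : G => ∀ S ∈ Sp, g ∉ S)).val) :
    2 ^ (m - 1) * (2 ^ ℓ * d - 1) ≡ e [MOD 3] := by
  have hpow : 2 ≤ 2 ^ m := Nat.le_self_pow (by omega) 2
  have hne : Sp.Nonempty := Finset.nonempty_of_ne_empty fun h => by
    simp only [h, Finset.filter_empty, Finset.card_empty] at h2
    omega
  have hcompl : (Finset.univ.filter fun g : G => ∀ S ∈ Sp, g ∉ S).card = 6 * F.card := by
    rw [← card_famDiffs_of_card_eq_three hF3, hDF, Finset.card_val]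
  have hcount := card_compl_spreadUnion Sp
  rw [card_spreadUnion hne htriv, sum_card_sub_one_of_card_eq_two_or_three horders, h2, h3,
    hcompl, hcard] at hcount
  exact two_pow_pred_mul_sub_one_modEq (n := F.card) hm (by omega)

/-- Let `G` be a finite abelian group of order `2^(m+ℓ) d` with `d` odd, having exactly
`2^m - 1` involutions. If there is a family of 3-subsets of `G` whose multiset of differences
equals `G` minus the union of a partial spread of type `{2^(2^m-1), 3^e}` (each outside element
exactly once), then `2^(m-1) (2^ℓ d - 1) ≡ e (mod 3)`. -/
theorem stmt_5 {G : Type*} [AddCommGroup G] [Fintype G]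
    (m ℓ d e : ℕ) (hm : 1 ≤ m) (hd : Odd d)
    (hcard : Fintype.card G = 2 ^ (m + ℓ) * d)
    (hinv : (Finset.univ.filter (fun x : G => x ≠ 0 ∧ x + x = 0)).card = 2 ^ m - 1)
    (Sp : Finset (AddSubgroup G))
    (htriv : ∀ S ∈ Sp, ∀ S' ∈ Sp, S ≠ S' → S ⊓ S' = ⊥)
    (horders : ∀ S ∈ Sp, Nat.card ↥S = 2 ∨ Nat.card ↥S = 3)
    (h2 : (Sp.filter (fun (S : AddSubgroup G) => Nat.card ↥S = 2)).card = 2 ^ m - 1)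
    (h3 : (Sp.filter (fun (S : AddSubgroup G) => Nat.card ↥S = 3)).card = e)
    (F : Finset (Finset G)) (hF3 : ∀ T ∈ F, T.card = 3)
    (hDF : famDiffs F = (Finset.univ.filter (fun g : G => ∀ S ∈ Sp, g ∉ S)).val) :
    2 ^ (m - 1) * (2 ^ ℓ * d - 1) ≡ e [MOD 3] :=
  stmt_5_general m ℓ d e hm hcard Sp htriv horders h2 h3 F hF3 hDF
end

section
/- If there exists an (H, Σ, 3, 1)-difference family and a (K, 3, 1)-difference matrix, then there exists an (H × K, Σ', 3, 1)-difference family, where Σ' = {S × K : S ∈ Σ}. -/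
/-!
Enumerate each base block `T = {t_i}` along the rows of the difference matrix `M` and lift it,
for every column `k`, to the block `{(t_i, M i k)}`. For fixed rows `i ≠ j` the differences
`M i k - M j k` run over `K` exactly once as `k` varies, so the lifts of `T` have difference
multiset `ΔT × K`. Lifts of one block are pairwise distinct because the columns of a difference
matrix with two rows are distinct, and lifts of distinct blocks project onto distinct blocks. Hence
the lifted family has difference multiset `ΔF × K = (H \ ⋃ Σ) × K = (H × K) \ ⋃ Σ'`.
-/

open scoped Classical

open Finset Function

lemma Multiset.product_eq_bind {α β : Type*} (s : Multiset α) (t : Multiset β) :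
    s ×ˢ t = s.bind fun a => t.map (a, ·) :=
  rfl

lemma Multiset.bind_product {α β γ : Type*} (s : Multiset α) (f : α → Multiset β)
    (t : Multiset γ) : s.bind f ×ˢ t = s.bind fun a => f a ×ˢ t :=
  Multiset.bind_assoc

section Differences

variable {G : Type*} [AddCommGroup G]

lemma tripleDiffs_eq_map_offDiag (T : Finset G) :
    tripleDiffs T = T.offDiag.val.map fun p => p.1 - p.2 := by
  have hT : (T ×ˢ T).filter (fun p => p.1 ≠ p.2) = T.offDiag := by ext; simp [and_assoc]
  rw [tripleDiffs, hT]

lemma tripleDiffs_map_univ {ι : Type*} [Fintype ι] (e : ι ↪ G) :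
    tripleDiffs (univ.map e) = (univ : Finset ι).offDiag.val.map fun p => e p.1 - e p.2 := by
  have he : (univ.map e).offDiag = (univ : Finset ι).offDiag.map (e.prodMap e) := by
    ext ⟨a, b⟩
    simp only [mem_offDiag, mem_map, mem_univ, true_and, Embedding.coe_prodMap, Prod.exists,
      Prod.map, Prod.mk.injEq]
    grind
  rw [tripleDiffs_eq_map_offDiag, he, map_val, Multiset.map_map]
  rfl

lemma famDiffs_biUnion [DecidableEq G] {β : Type*} (s : Finset β) (t : β → Finset (Finset G))
    (h : (s : Set β).PairwiseDisjoint t) :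
    famDiffs (s.biUnion t) = s.val.bind fun b => famDiffs (t b) := by
  rw [← disjiUnion_eq_biUnion s t h, famDiffs, disjiUnion_val, Multiset.bind_assoc]
  rfl

end Differences

/-- A `(K, card ι, 1)`-difference matrix with rows indexed by `ι` and columns by `κ`. -/
def IsDifferenceMatrix {ι κ K : Type*} [AddCommGroup K] (M : ι → κ → K) : Prop :=
  ∀ i j, i ≠ j → Bijective fun k => M i k - M j k

lemma IsDifferenceMatrix.injective_col {ι κ K : Type*} [AddCommGroup K] {M : ι → κ → K}
    (hM : IsDifferenceMatrix M) [Nontrivial ι] : Injective fun k i => M i k := by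
  obtain ⟨i, j, hij⟩ := exists_pair_ne ι
  intro k k' h
  apply (hM i j hij).injective
  simp only [congrFun h i, congrFun h j]

section Lift

variable {ι κ H K : Type*} [Fintype ι] [Fintype κ]

def liftEmb (e : ι ↪ H) (c : ι → K) : ι ↪ H × K :=
  ⟨fun i => (e i, c i), fun _ _ h => e.injective (congrArg Prod.fst h)⟩

lemma image_fst_map_liftEmb (e : ι ↪ H) (c : ι → K) :
    (univ.map (liftEmb e c)).image Prod.fst = univ.map e := by
  rw [map_eq_image, image_image, map_eq_image]
  rfl

lemma map_liftEmb_injective (e : ι ↪ H) : Injective fun c : ι → K => univ.map (liftEmb e c) := by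
  intro c c' (h : univ.map (liftEmb e c) = univ.map (liftEmb e c'))
  funext i
  have hi : (e i, c i) ∈ univ.map (liftEmb e c') := by
    rw [← h]
    exact mem_map_of_mem (liftEmb e c) (mem_univ i)
  obtain ⟨j, -, hj : (e j, c' j) = (e i, c i)⟩ := mem_map.mp hi
  obtain rfl : j = i := e.injective (congrArg Prod.fst hj)
  exact (congrArg Prod.snd hj).symm

noncomputable def liftBlocks (M : ι → κ → K) (e : ι ↪ H) : Finset (Finset (H × K)) :=
  univ.image fun k => univ.map (liftEmb e (M · k))

lemma card_of_mem_liftBlocks {M : ι → κ → K} {e : ι ↪ H} {B : Finset (H × K)}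
    (hB : B ∈ liftBlocks M e) : B.card = Fintype.card ι := by
  obtain ⟨k, -, rfl⟩ := mem_image.mp hB
  rw [card_map, card_univ]

lemma image_fst_of_mem_liftBlocks {M : ι → κ → K} {e : ι ↪ H} {B : Finset (H × K)}
    (hB : B ∈ liftBlocks M e) : B.image Prod.fst = univ.map e := by
  obtain ⟨k, -, rfl⟩ := mem_image.mp hB
  exact image_fst_map_liftEmb e _

variable [AddCommGroup H] [AddCommGroup K] [Fintype K]

lemma bind_tripleDiffs_map_liftEmb {M : ι → κ → K} (hM : IsDifferenceMatrix M) (e : ι ↪ H) :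
    (univ : Finset κ).val.bind (fun k => tripleDiffs (univ.map (liftEmb e (M · k))))
      = tripleDiffs (univ.map e) ×ˢ (univ : Finset K).val := by
  simp only [tripleDiffs_map_univ]
  rw [Multiset.bind_map_comm, Multiset.product_eq_bind, Multiset.bind_map]
  refine Multiset.bind_congr fun p hp => ?_
  have hcol : (univ : Finset κ).val.map (fun k => M p.1 k - M p.2 k) = (univ : Finset K).val :=
    (Multiset.bijective_iff_map_univ_eq_univ _).mp (hM p.1 p.2 (mem_offDiag.mp hp).2.2)
  rw [← hcol, Multiset.map_map]
  rfl

lemma famDiffs_liftBlocks {M : ι → κ → K} (hM : IsDifferenceMatrix M) [Nontrivial ι]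
    (e : ι ↪ H) : famDiffs (liftBlocks M e) = tripleDiffs (univ.map e) ×ˢ (univ : Finset K).val := by
  have hinj : Injective fun k => univ.map (liftEmb e (M · k)) :=
    (map_liftEmb_injective e).comp hM.injective_col
  rw [famDiffs, liftBlocks, image_val_of_injOn hinj.injOn, Multiset.bind_map]
  exact bind_tripleDiffs_map_liftEmb hM e

end Lift

theorem exists_famDiffs_eq_product {ι κ H K : Type*} [Fintype ι] [Nontrivial ι] [Fintype κ]
    [AddCommGroup H] [AddCommGroup K] [Fintype K] {F : Finset (Finset H)}
    (hF : ∀ T ∈ F, T.card = Fintype.card ι) {M : ι → κ → K} (hM : IsDifferenceMatrix M) :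
    ∃ F' : Finset (Finset (H × K)), (∀ B ∈ F', B.card = Fintype.card ι) ∧
      famDiffs F' = famDiffs F ×ˢ (univ : Finset K).val := by
  choose e he using fun T hT => Embedding.exists_of_card_eq_finset (α := ι) (hF T hT).symm
  have hdisj : (F.attach : Set F).PairwiseDisjoint fun T => liftBlocks M (e T.1 T.2) := by
    rintro ⟨T, hT⟩ - ⟨T', hT'⟩ - hne
    refine disjoint_left.mpr fun B hB hB' => hne (Subtype.ext ?_)
    change T = T'
    rw [← he T hT, ← he T' hT', ← image_fst_of_mem_liftBlocks hB,
      ← image_fst_of_mem_liftBlocks hB']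
  refine ⟨F.attach.biUnion fun T => liftBlocks M (e T.1 T.2), ?_, ?_⟩
  · intro B hB
    obtain ⟨T, -, hB⟩ := mem_biUnion.mp hB
    exact card_of_mem_liftBlocks hB
  · rw [famDiffs_biUnion _ _ hdisj, famDiffs, Multiset.bind_product]
    simp only [famDiffs_liftBlocks hM, he]
    rw [← Multiset.attach_map_val F.val, Multiset.bind_map, attach_val]
    rfl

theorem stmt_7_general {H K : Type*} [AddCommGroup H] [Fintype H] [AddCommGroup K] [Fintype K]
    (Sp : Finset (AddSubgroup H))
    (F : Finset (Finset H)) (hF3 : ∀ T ∈ F, T.card = 3)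
    (hDF : famDiffs F = (Finset.univ.filter (fun g : H => ∀ S ∈ Sp, g ∉ S)).val)
    (M : Fin 3 → Fin (Fintype.card K) → K)
    (hDM : ∀ i j : Fin 3, i ≠ j → Function.Bijective (fun k => M i k - M j k)) :
    ∃ F' : Finset (Finset (H × K)), (∀ T ∈ F', T.card = 3) ∧
      famDiffs F' = (Finset.univ.filter
        (fun g : H × K => ∀ S' ∈ Sp.image (fun S => S.prod (⊤ : AddSubgroup K)), g ∉ S')).val := by
  obtain ⟨F', hF'3, hF'⟩ :=
    exists_famDiffs_eq_product (by simpa only [Fintype.card_fin] using hF3) (M := M) hDM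
  refine ⟨F', by simpa only [Fintype.card_fin] using hF'3, ?_⟩
  have hprod : (univ.filter fun g : H × K =>
      ∀ S' ∈ Sp.image (fun S => S.prod (⊤ : AddSubgroup K)), g ∉ S')
      = (univ.filter fun g : H => ∀ S ∈ Sp, g ∉ S) ×ˢ univ := by
    ext ⟨h, k⟩
    simp [AddSubgroup.mem_prod]
  rw [hF', hDF, hprod, product_val]

/-- If there is an `(H, Σ, 3, 1)`-difference family and a `(K, 3, 1)`-difference matrix,
then there is an `(H × K, Σ', 3, 1)`-difference family, where `Σ' = {S × K : S ∈ Σ}`. -/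
theorem stmt_7 {H K : Type*} [AddCommGroup H] [Fintype H] [AddCommGroup K] [Fintype K]
    (Sp : Finset (AddSubgroup H))
    (htriv : ∀ S ∈ Sp, ∀ S' ∈ Sp, S ≠ S' → S ⊓ S' = ⊥)
    (F : Finset (Finset H)) (hF3 : ∀ T ∈ F, T.card = 3)
    (hDF : famDiffs F = (Finset.univ.filter (fun g : H => ∀ S ∈ Sp, g ∉ S)).val)
    (M : Fin 3 → Fin (Fintype.card K) → K)
    (hDM : ∀ i j : Fin 3, i ≠ j → Function.Bijective (fun k => M i k - M j k)) :
    ∃ F' : Finset (Finset (H × K)), (∀ T ∈ F', T.card = 3) ∧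
      famDiffs F' = (Finset.univ.filter
        (fun g : H × K => ∀ S' ∈ Sp.image (fun S => S.prod (⊤ : AddSubgroup K)), g ∉ S')).val :=
  stmt_7_general Sp F hF3 hDF M hDM
end

section
/- Suppose f = 2^m − 1 with m ≥ 3, and v, f satisfy v − f = 2^m u with u ≡ 0 (mod 3) and m odd, and suppose there is an abelian group G of order v − f with exactly f involutions admitting a (G, {2^f, 3^e}, 3, 1)-difference family. Then 9 divides u, i.e., v ≡ 2^m − 1 (mod 2^m · 9). -/
/-!
Each triple of `F` contributes six differences and the spread covers `1 + f + 2e` elements, so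
`|G| = 6|F| + 1 + f + 2e`. As `m` is odd, `f = 2^m - 1 ≡ 1 (mod 3)`, and `3 ∣ |G|` then forces
`e ≡ 2 (mod 3)`: the spread has two subgroups of order 3. They meet trivially, so `G` contains
their direct sum and `9 ∣ |G| = 2^m u`, whence `9 ∣ u`.
-/

open scoped Classical

theorem AddSubgroup.card_mul_card_dvd_of_inf_eq_bot {G : Type*} [AddCommGroup G]
    {S S' : AddSubgroup G} (h : S ⊓ S' = ⊥) : Nat.card S * Nat.card S' ∣ Nat.card G := by
  have hinj : Function.Injective ((QuotientAddGroup.mk' S).comp S'.subtype) := by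
    rw [injective_iff_map_eq_zero]
    rintro ⟨x, hx⟩ hx0
    have : x ∈ S ⊓ S' := ⟨(QuotientAddGroup.eq_zero_iff x).mp hx0, hx⟩
    simpa [h] using this
  rw [AddSubgroup.card_eq_card_quotient_mul_card_addSubgroup S, mul_comm]
  exact mul_dvd_mul_right (AddSubgroup.card_dvd_of_injective _ hinj) _

section Differences

variable {G : Type*} [AddCommGroup G]

theorem card_famDiffs {F : Finset (Finset G)} {k : ℕ} (hF : ∀ T ∈ F, T.card = k) :
    Multiset.card (famDiffs F) = F.card * (k * k - k) := by
  rw [famDiffs, Multiset.card_bind, ← Finset.sum_eq_multiset_sum, Finset.sum_congr rfl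
    (fun T hT => by rw [Function.comp_apply, card_tripleDiffs, hF T hT]), Finset.sum_const,
    smul_eq_mul]

end Differences

theorem card_filter_forall_notMem_add_one_add_sum {G : Type*} [AddCommGroup G] [Fintype G]
    {Sp : Finset (AddSubgroup G)} (hSp : Sp.Nonempty)
    (htriv : ∀ S ∈ Sp, ∀ S' ∈ Sp, S ≠ S' → S ⊓ S' = ⊥) :
    (Finset.univ.filter (fun g : G => ∀ S ∈ Sp, g ∉ S)).card
      + (1 + ∑ S ∈ Sp, (Nat.card S - 1)) = Fintype.card G := by
  set C := Sp.biUnion (fun S => (Finset.univ.filter (· ∈ S)).erase (0 : G))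
  have hC : C.card = ∑ S ∈ Sp, (Nat.card S - 1) := by
    rw [Finset.card_biUnion]
    · refine Finset.sum_congr rfl fun S _ => ?_
      rw [Finset.card_erase_of_mem (by simp), Nat.card_eq_fintype_card, Fintype.card_subtype]
    · intro S hS S' hS' hne
      rw [Function.onFun, Finset.disjoint_left]
      intro g hg hg'
      simp only [Finset.mem_erase, Finset.mem_filter, Finset.mem_univ, true_and] at hg hg'
      have : g ∈ S ⊓ S' := ⟨hg.2, hg'.2⟩
      rw [htriv S hS S' hS' hne, AddSubgroup.mem_bot] at this
      exact hg.1 this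
  have hcovered : Finset.univ.filter (fun g : G => ¬ ∀ S ∈ Sp, g ∉ S) = insert 0 C := by
    obtain ⟨S₀, hS₀⟩ := hSp
    ext g
    by_cases hg : g = 0
    · simp only [hg, Finset.mem_insert, true_or, iff_true, Finset.mem_filter, Finset.mem_univ,
        true_and]
      exact fun h => h S₀ hS₀ S₀.zero_mem
    · simp [hg, C]
  have h0 : (0 : G) ∉ C := by simp [C]
  have hsplit := Finset.card_filter_add_card_filter_not (s := Finset.univ)
    (fun g : G => ∀ S ∈ Sp, g ∉ S)
  rw [hcovered, Finset.card_insert_of_notMem h0, hC, Finset.card_univ] at hsplit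
  omega

theorem Finset.sum_sub_one_of_forall_eq_two_or_three {α : Type*} {s : Finset α} {c : α → ℕ}
    (hc : ∀ a ∈ s, c a = 2 ∨ c a = 3) :
    ∑ a ∈ s, (c a - 1) = (s.filter (c · = 2)).card + 2 * (s.filter (c · = 3)).card := by
  simp only [Finset.card_filter, Finset.mul_sum, ← Finset.sum_add_distrib]
  refine Finset.sum_congr rfl fun a ha => ?_
  rcases hc a ha with h | h <;> simp [h]

theorem Nat.two_pow_mod_three_of_odd {m : ℕ} (hm : Odd m) : 2 ^ m % 3 = 2 := by
  obtain ⟨k, rfl⟩ := hm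
  rw [pow_succ, pow_mul, Nat.mul_mod, Nat.pow_mod]
  norm_num

theorem stmt_15_general {G : Type*} [AddCommGroup G] [Fintype G]
    (m u v e f : ℕ) (hmodd : Odd m)
    (hf : f = 2 ^ m - 1)
    (hvf : v - f = 2 ^ m * u) (hu : u % 3 = 0)
    (hcard : Fintype.card G = v - f)
    (Sp : Finset (AddSubgroup G))
    (htriv : ∀ S ∈ Sp, ∀ S' ∈ Sp, S ≠ S' → S ⊓ S' = ⊥)
    (horders : ∀ S ∈ Sp, Nat.card ↥S = 2 ∨ Nat.card ↥S = 3)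
    (h2 : (Sp.filter (fun (S : AddSubgroup G) => Nat.card ↥S = 2)).card = f)
    (h3 : (Sp.filter (fun (S : AddSubgroup G) => Nat.card ↥S = 3)).card = e)
    (F : Finset (Finset G)) (hF3 : ∀ T ∈ F, T.card = 3)
    (hDF : famDiffs F = (Finset.univ.filter (fun g : G => ∀ S ∈ Sp, g ∉ S)).val) :
    9 ∣ u := by
  have hf3 : f % 3 = 1 := by
    have h2m := Nat.two_pow_mod_three_of_odd hmodd
    generalize 2 ^ m = N at h2m hf
    omega
  have hSp : Sp.Nonempty := by
    rw [← Finset.card_pos]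
    exact lt_of_lt_of_le (by omega) (h2 ▸ Finset.card_filter_le _ _)
  have hcount : F.card * (3 * 3 - 3) + (1 + (f + 2 * e)) = Fintype.card G := by
    have hdiff := congrArg Multiset.card hDF
    rw [card_famDiffs hF3, Finset.card_val] at hdiff
    rw [hdiff, ← h2, ← h3, ← Finset.sum_sub_one_of_forall_eq_two_or_three horders,
      card_filter_forall_notMem_add_one_add_sum hSp htriv]
  have hG3 : Fintype.card G % 3 = 0 := by rw [hcard, hvf, Nat.mul_mod, hu, mul_zero, Nat.zero_mod]
  obtain ⟨S, hS, S', hS', hne⟩ := Finset.one_lt_card.mp (by omega :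
    1 < (Sp.filter fun S : AddSubgroup G => Nat.card S = 3).card)
  rw [Finset.mem_filter] at hS hS'
  have h9 : 9 ∣ 2 ^ m * u := by
    have := AddSubgroup.card_mul_card_dvd_of_inf_eq_bot (htriv S hS.1 S' hS'.1 hne)
    rwa [hS.2, hS'.2, Nat.card_eq_fintype_card, hcard, hvf] at this
  exact (Nat.Coprime.pow_right m (by norm_num)).dvd_of_dvd_mul_left h9

/-- Suppose `f = 2^m − 1` with `m ≥ 3` odd, `v − f = 2^m u` with `3 ∣ u`, and there is an
abelian group `G` of order `v − f` with exactly `f` involutions admitting a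
`(G, {2^f, 3^e}, 3, 1)`-difference family. Then `9 ∣ u`, i.e. `v ≡ 2^m − 1 (mod 2^m · 9)`. -/
theorem stmt_15 {G : Type*} [AddCommGroup G] [Fintype G]
    (m u v e f : ℕ) (hm : 3 ≤ m) (hmodd : Odd m)
    (hf : f = 2 ^ m - 1) (hfv : f < v)
    (hvf : v - f = 2 ^ m * u) (hu : u % 3 = 0)
    (hcard : Fintype.card G = v - f)
    (hinv : (Finset.univ.filter (fun x : G => x ≠ 0 ∧ x + x = 0)).card = f)
    (Sp : Finset (AddSubgroup G))
    (htriv : ∀ S ∈ Sp, ∀ S' ∈ Sp, S ≠ S' → S ⊓ S' = ⊥)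
    (horders : ∀ S ∈ Sp, Nat.card ↥S = 2 ∨ Nat.card ↥S = 3)
    (h2 : (Sp.filter (fun (S : AddSubgroup G) => Nat.card ↥S = 2)).card = f)
    (h3 : (Sp.filter (fun (S : AddSubgroup G) => Nat.card ↥S = 3)).card = e)
    (F : Finset (Finset G)) (hF3 : ∀ T ∈ F, T.card = 3)
    (hDF : famDiffs F = (Finset.univ.filter (fun g : G => ∀ S ∈ Sp, g ∉ S)).val) :
    9 ∣ u :=
  stmt_15_general m u v e f hmodd hf hvf hu hcard Sp htriv horders h2 h3 F hF3 hDF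
end

section
/- Let a ≥ 1, and let (s_1, …, s_a) be a k-extended Skolem sequence of order a (defect b = 1), i.e., {s_i, s_i + i : 1 ≤ i ≤ a} = [1, 2a+1] \ {k}. Then a ≡ 0, 1 (mod 4) if k is odd, and a ≡ 2, 3 (mod 4) if k is even. -/
lemma sumIcc_mul_two (n : ℕ) : (∑ i ∈ Finset.Icc 1 n, i) * 2 = n * (n + 1) := by
  induction n with
  | zero => simp
  | succ m ih =>
    rw [Finset.sum_Icc_succ_top (by omega : 1 ≤ m + 1), add_mul, ih]
    ring

/-- If `(s_1, …, s_a)` is a `k`-extended Skolem sequence of order `a ≥ 1`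
(i.e. `{s_i, s_i + i : 1 ≤ i ≤ a} = [1, 2a+1] \ {k}`), then
`a ≡ 0, 1 (mod 4)` when `k` is odd and `a ≡ 2, 3 (mod 4)` when `k` is even. -/
theorem stmt_18 (a k : ℕ) (ha : 1 ≤ a) (s : ℕ → ℕ)
    (hSkolem : ((Finset.Icc 1 a).val.map s) +
        ((Finset.Icc 1 a).val.map (fun i => s i + i)) =
      ((Finset.Icc 1 (2 * a + 1)).erase k).val) :
    (Odd k → a % 4 = 0 ∨ a % 4 = 1) ∧ (Even k → a % 4 = 2 ∨ a % 4 = 3) := by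
  -- k must be in the interval (by cardinality)
  have hcard := congrArg Multiset.card hSkolem
  simp only [Multiset.card_add, Multiset.card_map, Finset.card_val, Nat.card_Icc] at hcard
  have hk : k ∈ Finset.Icc 1 (2 * a + 1) := by
    by_contra hk
    rw [Finset.erase_eq_of_notMem hk] at hcard
    simp [Nat.card_Icc] at hcard
    omega
  -- sum both sides
  have hsum := congrArg Multiset.sum hSkolem
  simp only [Multiset.sum_add, Multiset.sum_map_add] at hsum
  set S := ∑ i ∈ Finset.Icc 1 a, s i with hS
  set T := ∑ i ∈ Finset.Icc 1 a, i with hT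
  set U := ∑ i ∈ Finset.Icc 1 (2 * a + 1), i with hU
  have hT' : (Multiset.map (fun i => i) (Finset.Icc 1 a).val).sum = T := rfl
  have hR : (((Finset.Icc 1 (2 * a + 1)).erase k).val).sum + k = U := by
    have h := Finset.sum_erase_add (Finset.Icc 1 (2 * a + 1)) (fun x => x) hk
    have e : (((Finset.Icc 1 (2 * a + 1)).erase k).val).sum
        = ∑ x ∈ (Finset.Icc 1 (2 * a + 1)).erase k, x :=
      (congrArg Multiset.sum (Multiset.map_id' _)).symm
    rw [e]
    exact h
  have hS' : (Multiset.map s (Finset.Icc 1 a).val).sum = S := rfl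
  rw [hT', hS'] at hsum
  have hmain : S + (S + T) + k = U := by omega
  have h2T : T * 2 = a * (a + 1) := sumIcc_mul_two a
  have h2U : U * 2 = (2 * a + 1) * (2 * a + 2) := sumIcc_mul_two (2 * a + 1)
  -- reduce to mod-4 facts
  have haa : a * (a + 1) % 4 = (a % 4) * (a % 4 + 1) % 4 := by
    conv_lhs => rw [Nat.mul_mod]
    conv_rhs => rw [Nat.mul_mod]
    congr 2 <;> omega
  have hU4 : (2 * a + 1) * (2 * a + 2) % 8 = ((2 * (a % 4) + 1) * (2 * (a % 4) + 2)) % 8 := by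
    conv_lhs => rw [Nat.mul_mod]
    conv_rhs => rw [Nat.mul_mod]
    congr 2 <;> omega
  rw [Nat.odd_iff, Nat.even_iff]
  have hr : a % 4 = 0 ∨ a % 4 = 1 ∨ a % 4 = 2 ∨ a % 4 = 3 := by omega
  rcases hr with h | h | h | h <;> rw [h] at haa hU4 <;> norm_num at haa hU4 <;> omega
end
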